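/- Let 0 < γ < η, μ ∈ ℝ, α, β ∈ (0,1), and let ν be the pushforward of the product measure (Gaussian mean μ, variance η²−γ²) × (Gaussian mean 0, variance γ²) under (ŷ, e) ↦ (ŷ, ŷ + e). Set q_α = μ + √(η²−γ²)·Φ⁻¹(α) and q_β = μ + η·Φ⁻¹(β). Then for every measurable set A ⊆ ℝ whose measure under the Gaussian with mean μ and variance η²−γ² is at most α, one has ν({(ŷ, y) : ŷ ∈ A and y ≤ q_β}) ≤ ν({(ŷ, y) : ŷ ≤ q_α and y ≤ q_β}). -/

import Mathlib

open Real MeasureTheory Filter Topology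

/-- The standard normal density φ(x) = (2π)^{-1/2} exp(-x²/2). -/
noncomputable def stdNormalPDF (x : ℝ) : ℝ :=
  (Real.sqrt (2 * Real.pi))⁻¹ * Real.exp (-x ^ 2 / 2)

/-- The standard normal CDF Φ(x) = ∫_{-∞}^x φ(u) du. -/
noncomputable def stdNormalCDF (x : ℝ) : ℝ :=
  ∫ u in Set.Iic x, stdNormalPDF u

/-- The standard bivariate normal density with correlation ρ. -/
noncomputable def biNormalPDF (x y ρ : ℝ) : ℝ :=
  (2 * Real.pi * Real.sqrt (1 - ρ ^ 2))⁻¹ *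
    Real.exp (-(x ^ 2 - 2 * ρ * x * y + y ^ 2) / (2 * (1 - ρ ^ 2)))

/-- The standard bivariate normal CDF Φ₂(a, b; ρ). -/
noncomputable def biNormalCDF (a b ρ : ℝ) : ℝ :=
  ∫ x in Set.Iic a, ∫ y in Set.Iic b, biNormalPDF x y ρ

/-- The inverse Φ⁻¹ of the standard normal CDF on (0,1). -/
noncomputable def stdNormalCDFInv (p : ℝ) : ℝ :=
  Function.invFun stdNormalCDF p

open ProbabilityTheory
open scoped ENNReal NNReal

lemma stdNormalPDF_eq : stdNormalPDF = gaussianPDFReal 0 1 := by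
  funext x
  simp [stdNormalPDF, gaussianPDFReal, neg_div]

lemma integrable_stdNormalPDF : Integrable stdNormalPDF := by
  rw [stdNormalPDF_eq]; exact integrable_gaussianPDFReal 0 1

lemma stdNormalPDF_nonneg (x : ℝ) : 0 ≤ stdNormalPDF x := by
  rw [stdNormalPDF_eq]; exact gaussianPDFReal_nonneg 0 1 x

lemma stdNormalCDF_nonneg (x : ℝ) : 0 ≤ stdNormalCDF x :=
  setIntegral_nonneg measurableSet_Iic fun u _ => stdNormalPDF_nonneg u

lemma gaussianReal_Iic (x : ℝ) :
    gaussianReal 0 1 (Set.Iic x) = ENNReal.ofReal (stdNormalCDF x) := by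
  rw [gaussianReal_apply_eq_integral 0 one_ne_zero, stdNormalCDF, stdNormalPDF_eq]

lemma continuous_stdNormalCDF : Continuous stdNormalCDF := by
  have h : stdNormalCDF = fun x => stdNormalCDF 0 + ∫ t in (0:ℝ)..x, stdNormalPDF t := by
    funext x
    rw [← intervalIntegral.integral_Iic_sub_Iic integrable_stdNormalPDF.integrableOn
      integrable_stdNormalPDF.integrableOn]
    simp only [stdNormalCDF]
    ring
  rw [h]
  exact continuous_const.add (integrable_stdNormalPDF.continuous_primitive 0)

lemma stdNormalCDF_tendsto_atTop : Tendsto stdNormalCDF atTop (𝓝 1) := by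
  have h2 : Tendsto (fun x => (gaussianReal 0 1 (Set.Iic x)).toReal) atTop
      (𝓝 (gaussianReal 0 1 Set.univ).toReal) :=
    (ENNReal.tendsto_toReal (measure_ne_top _ _)).comp (tendsto_measure_Iic_atTop _)
  have he : (fun x => (gaussianReal 0 1 (Set.Iic x)).toReal) = stdNormalCDF := by
    funext x; rw [gaussianReal_Iic, ENNReal.toReal_ofReal (stdNormalCDF_nonneg x)]
  rw [he] at h2
  simpa [measure_univ] using h2

lemma stdNormalCDF_tendsto_atBot : Tendsto stdNormalCDF atBot (𝓝 0) := by
  have h : Tendsto (fun x : ℝ => gaussianReal 0 1 (Set.Iic x)) atBot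
      (𝓝 (gaussianReal 0 1 (⋂ x : ℝ, Set.Iic x))) := by
    have := tendsto_measure_iInter_atBot (μ := gaussianReal 0 1) (s := fun x : ℝ => Set.Iic x)
      (fun x => measurableSet_Iic.nullMeasurableSet)
      (fun _ _ hxy => Set.Iic_subset_Iic.mpr hxy) ⟨0, measure_ne_top _ _⟩
    exact this
  have hempty : (⋂ x : ℝ, Set.Iic x) = ∅ := by
    ext y; simp only [Set.mem_iInter, Set.mem_Iic, Set.mem_empty_iff_false, iff_false, not_forall]
    exact ⟨y - 1, by push_neg; linarith⟩
  rw [hempty, measure_empty] at h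
  have h2 : Tendsto (fun x => (gaussianReal 0 1 (Set.Iic x)).toReal) atBot (𝓝 (0:ℝ≥0∞).toReal) :=
    (ENNReal.tendsto_toReal (by simp)).comp h
  have he : (fun x => (gaussianReal 0 1 (Set.Iic x)).toReal) = stdNormalCDF := by
    funext x; rw [gaussianReal_Iic, ENNReal.toReal_ofReal (stdNormalCDF_nonneg x)]
  rw [he] at h2
  simpa using h2

lemma exists_stdNormalCDF_eq {p : ℝ} (hp : p ∈ Set.Ioo (0:ℝ) 1) : ∃ x, stdNormalCDF x = p := by
  obtain ⟨a, ha⟩ := (stdNormalCDF_tendsto_atBot.eventually_lt_const hp.1).exists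
  obtain ⟨b, hb⟩ := (stdNormalCDF_tendsto_atTop.eventually_const_lt hp.2).exists
  have hsub := intermediate_value_uIcc (f := stdNormalCDF) (a := a) (b := b)
    continuous_stdNormalCDF.continuousOn
  have hp' : p ∈ Set.uIcc (stdNormalCDF a) (stdNormalCDF b) :=
    Set.mem_uIcc.mpr (Or.inl ⟨ha.le, hb.le⟩)
  obtain ⟨x, _, hx⟩ := hsub hp'
  exact ⟨x, hx⟩

lemma stdNormalCDF_invFun {p : ℝ} (hp : p ∈ Set.Ioo (0:ℝ) 1) :
    stdNormalCDF (stdNormalCDFInv p) = p :=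
  Function.invFun_eq (exists_stdNormalCDF_eq hp)

lemma gaussianReal_affine_Iic {s : ℝ} (hs : 0 < s) (μ x : ℝ) :
    gaussianReal μ ((s^2 : ℝ)).toNNReal (Set.Iic (μ + s * x)) = ENNReal.ofReal (stdNormalCDF x) := by
  have h1 : Measure.map (s * ·) (gaussianReal 0 1) = gaussianReal 0 ((s^2 : ℝ)).toNNReal := by
    rw [gaussianReal_map_const_mul s, mul_zero]
    congr 1
    refine NNReal.coe_injective ?_
    simp [Real.coe_toNNReal _ (sq_nonneg s)]
  have h2 : Measure.map (fun u => s * u + μ) (gaussianReal 0 1)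
      = gaussianReal μ ((s^2 : ℝ)).toNNReal := by
    have hc : (fun u => s * u + μ) = (· + μ) ∘ (s * ·) := rfl
    rw [hc, ← Measure.map_map (measurable_add_const μ) (measurable_const_mul s), h1,
      gaussianReal_map_add_const, zero_add]
  rw [← h2, Measure.map_apply (by fun_prop) measurableSet_Iic]
  have hpre : (fun u => s * u + μ) ⁻¹' Set.Iic (μ + s * x) = Set.Iic x := by
    ext u
    simp only [Set.mem_preimage, Set.mem_Iic]
    constructor <;> intro h <;> nlinarith
  rw [hpre, gaussianReal_Iic]

lemma key_lintegral (P : Measure ℝ) [IsFiniteMeasure P] (g : ℝ → ℝ≥0∞) (hm : Measurable g)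
    (hanti : Antitone g) (q : ℝ) (A : Set ℝ) (hA : MeasurableSet A)
    (hcap : P A ≤ P (Set.Iic q)) :
    ∫⁻ x in A, g x ∂P ≤ ∫⁻ x in Set.Iic q, g x ∂P := by
  have hsplitA := lintegral_inter_add_diff (μ := P) g A (measurableSet_Iic (a := q))
  have hsplitI := lintegral_inter_add_diff (μ := P) g (Set.Iic q) hA
  have hmeas : P (A \ Set.Iic q) ≤ P (Set.Iic q \ A) := by
    have h1 := measure_inter_add_diff (μ := P) A (measurableSet_Iic (a := q))
    have h2 := measure_inter_add_diff (μ := P) (Set.Iic q) hA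
    have hkey : P (A ∩ Set.Iic q) + P (A \ Set.Iic q)
        ≤ P (A ∩ Set.Iic q) + P (Set.Iic q \ A) := by
      rw [h1]
      calc P A ≤ P (Set.Iic q) := hcap
        _ = P (A ∩ Set.Iic q) + P (Set.Iic q \ A) := by rw [← h2, Set.inter_comm]
    exact (ENNReal.add_le_add_iff_left (measure_ne_top P _)).mp hkey
  have hub : ∫⁻ x in A \ Set.Iic q, g x ∂P ≤ g q * P (A \ Set.Iic q) := by
    calc ∫⁻ x in A \ Set.Iic q, g x ∂P
        ≤ ∫⁻ _ in A \ Set.Iic q, g q ∂P :=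
          setLIntegral_mono measurable_const fun x hx => hanti (le_of_not_ge hx.2)
      _ = g q * P (A \ Set.Iic q) := setLIntegral_const _ _
  have hlb : g q * P (Set.Iic q \ A) ≤ ∫⁻ x in Set.Iic q \ A, g x ∂P := by
    rw [← setLIntegral_const]
    exact setLIntegral_mono hm fun x hx => hanti hx.1
  calc ∫⁻ x in A, g x ∂P
      = ∫⁻ x in A ∩ Set.Iic q, g x ∂P + ∫⁻ x in A \ Set.Iic q, g x ∂P := hsplitA.symm
    _ ≤ ∫⁻ x in A ∩ Set.Iic q, g x ∂P + g q * P (A \ Set.Iic q) := add_le_add_right hub _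
    _ ≤ ∫⁻ x in A ∩ Set.Iic q, g x ∂P + g q * P (Set.Iic q \ A) :=
        add_le_add_right (mul_le_mul_right hmeas _) _
    _ ≤ ∫⁻ x in A ∩ Set.Iic q, g x ∂P + ∫⁻ x in Set.Iic q \ A, g x ∂P := add_le_add_right hlb _
    _ = ∫⁻ x in Set.Iic q, g x ∂P := by rw [← hsplitI, Set.inter_comm]

lemma joint_measure_eq (P Q : Measure ℝ) [SFinite Q] (c : ℝ) (B : Set ℝ) (hB : MeasurableSet B) :
    Measure.map (fun p : ℝ × ℝ => (p.1, p.1 + p.2)) (P.prod Q) {p : ℝ × ℝ | p.1 ∈ B ∧ p.2 ≤ c}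
      = ∫⁻ x in B, Q (Set.Iic (c - x)) ∂P := by
  have hmap : Measurable (fun p : ℝ × ℝ => (p.1, p.1 + p.2)) :=
    measurable_fst.prodMk (measurable_fst.add measurable_snd)
  have hS : MeasurableSet {p : ℝ × ℝ | p.1 ∈ B ∧ p.2 ≤ c} := by
    have he : {p : ℝ × ℝ | p.1 ∈ B ∧ p.2 ≤ c} = B ×ˢ Set.Iic c := rfl
    rw [he]; exact hB.prod measurableSet_Iic
  rw [Measure.map_apply hmap hS, Measure.prod_apply (hmap hS), ← lintegral_indicator hB _]
  refine lintegral_congr fun x => ?_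
  by_cases hx : x ∈ B
  · have hpre : Prod.mk x ⁻¹' ((fun p : ℝ × ℝ => (p.1, p.1 + p.2)) ⁻¹'
        {p : ℝ × ℝ | p.1 ∈ B ∧ p.2 ≤ c}) = Set.Iic (c - x) := by
      ext e
      simp only [Set.mem_preimage, Set.mem_setOf_eq, hx, true_and, Set.mem_Iic]
      exact le_sub_iff_add_le'.symm
    rw [hpre, Set.indicator_of_mem hx]
  · have hpre : Prod.mk x ⁻¹' ((fun p : ℝ × ℝ => (p.1, p.1 + p.2)) ⁻¹'
        {p : ℝ × ℝ | p.1 ∈ B ∧ p.2 ≤ c}) = ∅ := by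
      ext e; simp [hx]
    rw [hpre, Set.indicator_of_notMem hx, measure_empty]

/-- With ν the joint law of (Ŷ, Y) as in the Gaussian model, the
threshold policy 1{Ŷ ≤ q_α} maximizes the probability of screening an
individual in the worst-off β-fraction among all screening sets of capacity α. -/
theorem threshold_policy_optimal_gaussian (γ η μ α β : ℝ) (hγ : 0 < γ) (hγη : γ < η)
    (hα : α ∈ Set.Ioo (0 : ℝ) 1) (hβ : β ∈ Set.Ioo (0 : ℝ) 1)
    (ν : Measure (ℝ × ℝ))
    (hν : ν = Measure.map (fun p : ℝ × ℝ => (p.1, p.1 + p.2))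
      ((gaussianReal μ ((η ^ 2 - γ ^ 2).toNNReal)).prod (gaussianReal 0 ((γ ^ 2).toNNReal))))
    (qα qβ : ℝ) (hqα : qα = μ + Real.sqrt (η ^ 2 - γ ^ 2) * stdNormalCDFInv α)
    (hqβ : qβ = μ + η * stdNormalCDFInv β)
    (A : Set ℝ) (hA : MeasurableSet A)
    (hcap : gaussianReal μ ((η ^ 2 - γ ^ 2).toNNReal) A ≤ ENNReal.ofReal α) :
    ν {p : ℝ × ℝ | p.1 ∈ A ∧ p.2 ≤ qβ} ≤ ν {p : ℝ × ℝ | p.1 ≤ qα ∧ p.2 ≤ qβ} := by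
  have hpos : (0:ℝ) < η ^ 2 - γ ^ 2 := by nlinarith
  set s : ℝ := Real.sqrt (η ^ 2 - γ ^ 2) with hs_def
  have hs : 0 < s := Real.sqrt_pos.mpr hpos
  have hs2 : s ^ 2 = η ^ 2 - γ ^ 2 := Real.sq_sqrt hpos.le
  have hveq : ((η:ℝ) ^ 2 - γ ^ 2).toNNReal = ((s ^ 2 : ℝ)).toNNReal := by rw [hs2]
  have hIic : gaussianReal μ ((η ^ 2 - γ ^ 2).toNNReal) (Set.Iic qα) = ENNReal.ofReal α := by
    rw [hveq, hqα, gaussianReal_affine_Iic hs, stdNormalCDF_invFun hα]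
  set P := gaussianReal μ ((η ^ 2 - γ ^ 2).toNNReal)
  set Q := gaussianReal 0 ((γ ^ 2).toNNReal)
  set g : ℝ → ℝ≥0∞ := fun x => Q (Set.Iic (qβ - x)) with hg_def
  have hanti : Antitone g := fun x y hxy =>
    measure_mono (Set.Iic_subset_Iic.mpr (by linarith))
  have hm : Measurable g := hanti.measurable
  have hset : {p : ℝ × ℝ | p.1 ≤ qα ∧ p.2 ≤ qβ}
      = {p : ℝ × ℝ | p.1 ∈ Set.Iic qα ∧ p.2 ≤ qβ} := rfl
  rw [hν, joint_measure_eq P Q qβ A hA, hset,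
    joint_measure_eq P Q qβ (Set.Iic qα) measurableSet_Iic]
  exact key_lintegral P g hm hanti qα A hA (hIic ▸ hcap)
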